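/- arXiv:2308.13091 — 3 statements merged into one kernel-verified Lean document; each statement's English description precedes it below -/
import Mathlib

section
/- Fix natural numbers m, r ≥ 1 and a circuit topology T = ((k_1, S_1), …, (k_r, S_r)) for circuits with m wires (so 1 ≤ k_i and S_i : Fin k_i ↪ Fin m injective), and let s = Σ_{i=1}^{r} 2 · (2^{k_i})² (the total number of real and imaginary parts of all gate matrix entries). Then for every pair of basis bit strings b, b' : Fin m → Fin 2, there exists a real polynomial P_{b,b'} ∈ MvPolynomial (Fin s) ℝ of total degree at most 2r such that for every quantum circuit C with topology T (i.e., every choice of unitary gate matrices U_1, …, U_r of the prescribed sizes), the squared modulus of the (b, b') entry of U(C) equals P_{b,b'} evaluated at the point of ℝ^s consisting of the real and imaginary parts of the entries of U_1, …, U_r. -/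
/-- Computational basis bit strings of an `m`-qubit register. -/
abbrev BitStr (m : ℕ) := Fin m → Fin 2

/-- The extension of a `k`-qubit gate matrix `U` to an `m`-qubit register along an
(injective) wire assignment `S : Fin k → Fin m`: the `(b, b')` entry equals
`U (b ∘ S) (b' ∘ S)` if `b` and `b'` agree off the range of `S`, and `0` otherwise. -/
def ExtMat {k m : ℕ} (S : Fin k → Fin m) (U : Matrix (BitStr k) (BitStr k) ℂ) :
    Matrix (BitStr m) (BitStr m) ℂ :=
  fun b b' =>
    if (∀ i, (∀ j, S j ≠ i) → b i = b' i) then U (fun j => b (S j)) (fun j => b' (S j)) else 0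

/-- The matrix `U(C) = Ext_{S_r}(U_r) ⋯ Ext_{S_1}(U_1)` implemented by a circuit whose `i`-th
gate acts via `U i` on the wires `S i`. -/
noncomputable def circMat {m r : ℕ} {k : Fin r → ℕ} (S : ∀ i, Fin (k i) → Fin m)
    (U : ∀ i, Matrix (BitStr (k i)) (BitStr (k i)) ℂ) : Matrix (BitStr m) (BitStr m) ℂ :=
  (List.ofFn fun i => ExtMat (S i) (U i)).reverse.prod

/-- The basis bit string of length `n + 1 + t` consisting of `x` on the first `n` wires,
`y` on wire `n`, and `0` on the remaining `t` ancilla wires. -/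
def padBits {n : ℕ} (t : ℕ) (x : Fin n → Fin 2) (y : Fin 2) : BitStr (n + 1 + t) :=
  fun i => if h : (i : ℕ) < n then x ⟨i, h⟩ else if (i : ℕ) = n then y else 0

/-- A matrix `M` on `n + 1 + t` qubits computes the Boolean function `f` (probabilistically):
the squared modulus of the entry in row `(x', y, 0^t)` and column `(x, 0, 0^t)` is `> 1/2`
when `x' = x` and `y = f x`, and `< 1/2` otherwise. -/
def MatComputes {n t : ℕ} (M : Matrix (BitStr (n + 1 + t)) (BitStr (n + 1 + t)) ℂ)
    (f : (Fin n → Fin 2) → Fin 2) : Prop :=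
  ∀ (x x' : Fin n → Fin 2) (y : Fin 2),
    (x' = x ∧ y = f x →
      1 / 2 < Complex.normSq (M (padBits t x' y) (padBits t x 0))) ∧
    (¬(x' = x ∧ y = f x) →
      Complex.normSq (M (padBits t x' y) (padBits t x 0)) < 1 / 2)

/-- A matrix `M` on `n + 1` qubits computes `f` stringently: it maps each basis vector
`|x, y⟩` to `|x, y ⊕ f x⟩`. -/
def MatComputesStringent {n : ℕ} (M : Matrix (BitStr (n + 1)) (BitStr (n + 1)) ℂ)
    (f : (Fin n → Fin 2) → Fin 2) : Prop :=
  ∀ (x : Fin n → Fin 2) (y : Fin 2) (b : BitStr (n + 1)),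
    M b (padBits 0 x y) = if b = padBits 0 x (y + f x) then 1 else 0

/-!
Every entry of `Ext_S(U)` is either `0` or an entry of `U`, so its real and imaginary parts are
coordinates of the point of `ℝ^s`. An entry of a product of `r` such matrices is a sum of products
of `r` entries, so its real and imaginary parts are real polynomials of degree at most `r` in
these coordinates, and the squared modulus `re² + im²` is one of degree at most `2r`.
-/

open MvPolynomial

section ReImPoly

variable {V σ : Type*}

def IsReImPoly (x : V → σ → ℝ) (n : ℕ) (f : V → ℂ) : Prop :=
  ∃ p q : MvPolynomial σ ℝ, p.totalDegree ≤ n ∧ q.totalDegree ≤ n ∧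
    ∀ v, f v = ⟨eval (x v) p, eval (x v) q⟩

variable {x : V → σ → ℝ} {n n' : ℕ} {f g : V → ℂ}

lemma isReImPoly_const (z : ℂ) : IsReImPoly x 0 fun _ => z :=
  ⟨C z.re, C z.im, (totalDegree_C _).le, (totalDegree_C _).le, fun _ => by simp⟩

lemma isReImPoly_of_coords (re im : σ) (h : ∀ v, f v = ⟨x v re, x v im⟩) : IsReImPoly x 1 f :=
  ⟨X re, X im, (totalDegree_X _).le, (totalDegree_X _).le, fun v => by simp [h]⟩

lemma IsReImPoly.mono (hf : IsReImPoly x n f) (hn : n ≤ n') : IsReImPoly x n' f := by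
  obtain ⟨p, q, hp, hq, hf⟩ := hf
  exact ⟨p, q, hp.trans hn, hq.trans hn, hf⟩

lemma IsReImPoly.add (hf : IsReImPoly x n f) (hg : IsReImPoly x n g) :
    IsReImPoly x n (f + g) := by
  obtain ⟨p, q, hp, hq, hf⟩ := hf
  obtain ⟨p', q', hp', hq', hg⟩ := hg
  refine ⟨p + p', q + q', (totalDegree_add _ _).trans (max_le hp hp'),
    (totalDegree_add _ _).trans (max_le hq hq'), fun v => ?_⟩
  simp [hf, hg, Complex.ext_iff]

lemma IsReImPoly.mul (hf : IsReImPoly x n f) (hg : IsReImPoly x n' g) :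
    IsReImPoly x (n + n') (f * g) := by
  obtain ⟨p, q, hp, hq, hf⟩ := hf
  obtain ⟨p', q', hp', hq', hg⟩ := hg
  have deg_mul {a b : MvPolynomial σ ℝ} (ha : a.totalDegree ≤ n) (hb : b.totalDegree ≤ n') :
      (a * b).totalDegree ≤ n + n' :=
    (totalDegree_mul a b).trans (add_le_add ha hb)
  refine ⟨p * p' - q * q', p * q' + q * p',
    (totalDegree_sub _ _).trans (max_le (deg_mul hp hp') (deg_mul hq hq')),
    (totalDegree_add _ _).trans (max_le (deg_mul hp hq') (deg_mul hq hp')), fun v => ?_⟩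
  simp [hf, hg, Complex.ext_iff]

lemma IsReImPoly.sum {ι : Type*} (s : Finset ι) {F : ι → V → ℂ}
    (hF : ∀ i ∈ s, IsReImPoly x n (F i)) : IsReImPoly x n fun v => ∑ i ∈ s, F i v := by
  rw [← Finset.sum_fn]
  exact Finset.sum_induction F (IsReImPoly x n) (fun _ _ => .add)
    ((isReImPoly_const 0).mono n.zero_le) hF

lemma IsReImPoly.normSq (hf : IsReImPoly x n f) :
    ∃ P : MvPolynomial σ ℝ, P.totalDegree ≤ 2 * n ∧ ∀ v, Complex.normSq (f v) = eval (x v) P := by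
  obtain ⟨p, q, hp, hq, hf⟩ := hf
  have deg_sq {a : MvPolynomial σ ℝ} (ha : a.totalDegree ≤ n) : (a * a).totalDegree ≤ 2 * n :=
    (totalDegree_mul a a).trans (by omega)
  exact ⟨p * p + q * q, (totalDegree_add _ _).trans (max_le (deg_sq hp) (deg_sq hq)),
    fun v => by simp [hf, Complex.normSq_apply]⟩

variable {ι : Type*} [Fintype ι]

lemma IsReImPoly.matrix_mul_apply {A B : V → Matrix ι ι ℂ}
    (hA : ∀ i j, IsReImPoly x n fun v => A v i j) (hB : ∀ i j, IsReImPoly x n' fun v => B v i j)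
    (i j : ι) : IsReImPoly x (n + n') fun v => (A v * B v) i j := by
  simp only [Matrix.mul_apply]
  exact IsReImPoly.sum _ fun c _ => (hA i c).mul (hB c j)

lemma isReImPoly_list_prod_apply [DecidableEq ι] {d : ℕ} (L : List (V → Matrix ι ι ℂ))
    (hL : ∀ A ∈ L, ∀ i j, IsReImPoly x d fun v => A v i j) (i j : ι) :
    IsReImPoly x (L.length * d) fun v => (L.map (· v)).prod i j := by
  induction L generalizing i j with
  | nil => simpa using isReImPoly_const ((1 : Matrix ι ι ℂ) i j)
  | cons A L ih =>
    have hprod := IsReImPoly.matrix_mul_apply (hL A List.mem_cons_self)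
      (ih fun B hB => hL B (List.mem_cons_of_mem _ hB)) i j
    simp only [List.map_cons, List.prod_cons, List.length_cons]
    convert hprod using 1
    ring

end ReImPoly

section Circuit

variable {m r : ℕ} {k : Fin r → ℕ} {σ : Type*}

def gateCoords (e : (Σ i : Fin r, Bool × (BitStr (k i) × BitStr (k i))) ≃ σ)
    (U : ∀ i, Matrix (BitStr (k i)) (BitStr (k i)) ℂ) (j : σ) : ℝ :=
  if (e.symm j).2.1 then (U (e.symm j).1 (e.symm j).2.2.1 (e.symm j).2.2.2).re
  else (U (e.symm j).1 (e.symm j).2.2.1 (e.symm j).2.2.2).im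

variable (e : (Σ i : Fin r, Bool × (BitStr (k i) × BitStr (k i))) ≃ σ)
  (S : ∀ i, Fin (k i) → Fin m)

lemma isReImPoly_gate_apply (i : Fin r) (c c' : BitStr (k i)) :
    IsReImPoly (gateCoords e) 1 fun U => U i c c' :=
  isReImPoly_of_coords (e ⟨i, true, c, c'⟩) (e ⟨i, false, c, c'⟩) fun U => by
    simp only [gateCoords]
    -- `simp` cannot rewrite `e.symm (e _)` inside the dependent application `U (e.symm _).1`
    rw [Equiv.symm_apply_apply, Equiv.symm_apply_apply]
    simp

lemma isReImPoly_extMat_apply (i : Fin r) (b b' : BitStr m) :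
    IsReImPoly (gateCoords e) 1 fun U => ExtMat (S i) (U i) b b' := by
  by_cases hb : ∀ w, (∀ j, S i j ≠ w) → b w = b' w
  · simp only [ExtMat, if_pos hb]
    exact isReImPoly_gate_apply e i _ _
  · simpa [ExtMat, hb] using (isReImPoly_const (x := gateCoords e) 0).mono zero_le_one

lemma isReImPoly_circMat_apply (b b' : BitStr m) :
    IsReImPoly (gateCoords e) r fun U => circMat S U b b' := by
  have hgates : ∀ A ∈ (List.ofFn fun i U => ExtMat (S i) (U i)).reverse,
      ∀ b b', IsReImPoly (gateCoords e) 1 fun U => A U b b' := by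
    intro A hA
    obtain ⟨i, rfl⟩ := List.mem_ofFn.mp (List.mem_reverse.mp hA)
    exact isReImPoly_extMat_apply e S i
  simpa [circMat, List.map_reverse, List.map_ofFn, Function.comp_def] using
    isReImPoly_list_prod_apply _ hgates b b'

end Circuit

theorem circuit_entry_normSq_is_polynomial_in_gate_entries_general
    (m r : ℕ)
    (k : Fin r → ℕ)
    (S : ∀ i, Fin (k i) → Fin m)
    (s : ℕ)
    -- an identification of the `s` coordinates with the real/imaginary parts
    -- (indexed by `Bool`) of the entries of the `r` gate matrices
    (e : (Σ i : Fin r, Bool × (BitStr (k i) × BitStr (k i))) ≃ Fin s)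
    (b b' : BitStr m) :
    ∃ P : MvPolynomial (Fin s) ℝ, P.totalDegree ≤ 2 * r ∧
      ∀ U : ∀ i, Matrix (BitStr (k i)) (BitStr (k i)) ℂ,
        (∀ i, U i ∈ Matrix.unitaryGroup (BitStr (k i)) ℂ) →
        Complex.normSq (circMat S U b b') =
          MvPolynomial.eval
            (fun j =>
              if (e.symm j).2.1 then (U (e.symm j).1 (e.symm j).2.2.1 (e.symm j).2.2.2).re
              else (U (e.symm j).1 (e.symm j).2.2.1 (e.symm j).2.2.2).im) P := by
  obtain ⟨P, hP, hPU⟩ := (isReImPoly_circMat_apply e S b b').normSq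
  exact ⟨P, hP, fun U _ => hPU U⟩

theorem circuit_entry_normSq_is_polynomial_in_gate_entries
    (m r : ℕ) (hm : 1 ≤ m) (hr : 1 ≤ r)
    (k : Fin r → ℕ) (hk : ∀ i, 1 ≤ k i)
    (S : ∀ i, Fin (k i) → Fin m) (hS : ∀ i, Function.Injective (S i))
    (s : ℕ) (hs : s = ∑ i : Fin r, 2 * 2 ^ k i * 2 ^ k i)
    -- an identification of the `s` coordinates with the real/imaginary parts
    -- (indexed by `Bool`) of the entries of the `r` gate matrices
    (e : (Σ i : Fin r, Bool × (BitStr (k i) × BitStr (k i))) ≃ Fin s)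
    (b b' : BitStr m) :
    ∃ P : MvPolynomial (Fin s) ℝ, P.totalDegree ≤ 2 * r ∧
      ∀ U : ∀ i, Matrix (BitStr (k i)) (BitStr (k i)) ℂ,
        (∀ i, U i ∈ Matrix.unitaryGroup (BitStr (k i)) ℂ) →
        Complex.normSq (circMat S U b b') =
          MvPolynomial.eval
            (fun j =>
              if (e.symm j).2.1 then (U (e.symm j).1 (e.symm j).2.2.1 (e.symm j).2.2.2).re
              else (U (e.symm j).1 (e.symm j).2.2.1 (e.symm j).2.2.2).im) P :=
  circuit_entry_normSq_is_polynomial_in_gate_entries_general m r k S s e b b'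
end

section
/- For every natural number q ≥ 1 there exists a real constant c with 0 < c < 1 such that for every natural number n ≥ 1, the number of distinct Boolean functions f : (Fin n → Fin 2) → Fin 2 that are computed stringently by some quantum circuit with n + 1 wires and at most c · 2^n / n gates of arity at most q is at most 2^{2^{n−1}}. -/
/-- `f` is computed stringently by some quantum circuit on `n + 1` wires with at most
`c * 2^n / n` gates, each of arity at most `q`. -/
def StringentlyComputedBySmallCircuit (q n : ℕ) (c : ℝ)
    (f : (Fin n → Fin 2) → Fin 2) : Prop :=
  ∃ (r : ℕ) (k : Fin r → ℕ) (S : ∀ i, Fin (k i) → Fin (n + 1))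
    (U : ∀ i, Matrix (BitStr (k i)) (BitStr (k i)) ℂ),
    (r : ℝ) ≤ c * 2 ^ n / n ∧
    (∀ i, 1 ≤ k i ∧ k i ≤ q) ∧
    (∀ i, Function.Injective (S i)) ∧
    (∀ i, U i ∈ Matrix.unitaryGroup (BitStr (k i)) ℂ) ∧
    MatComputesStringent (circMat S U) f

/-!
A circuit computing `f` stringently implements exactly the permutation matrix of `f`, so two such
circuits whose matrices are at operator-norm distance `< 1` compute the same function. Extending a
gate along its wires is, up to reordering the wires, `U ↦ U ⊗ 1`: a unital ⋆-homomorphism, hence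
it preserves unitarity and is norm-contractive, and telescoping bounds the distance between two
circuits with the same wiring by the sum of the distances between their gates. Rounding every gate
entry to the grid `ℤ / D` with `D = 2 · 4^q · (R + 1)` therefore gives a code that determines the
computed function. A circuit with at most `R ≤ c 2^n / n` gates has a code of `R · O_q(n)` bits,
which is at most `2^(n-1)` for `c = 2^-(3q+5)`.
-/

open Matrix
open scoped Kronecker Matrix.Norms.L2Operator

namespace Matrix

variable {𝕜 m n : Type*} [RCLike 𝕜] [Fintype m] [Fintype n] [DecidableEq n]

theorem norm_entry_le_l2_opNorm (A : Matrix m n 𝕜) (i : m) (j : n) : ‖A i j‖ ≤ ‖A‖ := by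
  have h := A.l2_opNorm_mulVec (EuclideanSpace.single j 1)
  rw [EuclideanSpace.single, PiLp.norm_single, norm_one, mul_one] at h
  refine le_trans (le_of_eq ?_) ((PiLp.norm_apply_le _ i).trans h)
  simp

theorem l2_opNorm_single_le [DecidableEq m] (i : m) (j : n) (c : 𝕜) : ‖single i j c‖ ≤ ‖c‖ := by
  rw [l2_opNorm_def]
  refine ContinuousLinearMap.opNorm_le_bound _ (norm_nonneg c) fun x => ?_
  have hx : single i j c *ᵥ x.ofLp = Pi.single i (c * x.ofLp j) := by
    rw [single_mulVec]; rfl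
  simp only [LinearEquiv.trans_apply, LinearMap.coe_toContinuousLinearMap', toLpLin_apply, hx,
    PiLp.toLp_single, PiLp.norm_single, norm_mul]
  exact mul_le_mul_of_nonneg_left (PiLp.norm_apply_le x j) (norm_nonneg c)

theorem l2_opNorm_le_of_norm_entry_le [DecidableEq m] {A : Matrix m n 𝕜} {ε : ℝ}
    (h : ∀ i j, ‖A i j‖ ≤ ε) : ‖A‖ ≤ Fintype.card m * Fintype.card n * ε := by
  calc ‖A‖ = ‖∑ i, ∑ j, single i j (A i j)‖ := by rw [← matrix_eq_sum_single]
    _ ≤ ∑ i : m, ∑ j : n, ε := by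
      refine (norm_sum_le _ _).trans (Finset.sum_le_sum fun i _ => ?_)
      exact (norm_sum_le _ _).trans
        (Finset.sum_le_sum fun j _ => (l2_opNorm_single_le i j _).trans (h i j))
    _ = Fintype.card m * Fintype.card n * ε := by simp [mul_assoc]

end Matrix

theorem CStarRing.norm_list_prod_sub_le {E : Type*} [NormedRing E] [StarRing E] [CStarRing E] :
    ∀ l : List (E × E), (∀ p ∈ l, p.1 ∈ unitary E ∧ p.2 ∈ unitary E) →
      ‖(l.map Prod.fst).prod - (l.map Prod.snd).prod‖ ≤ (l.map fun p => ‖p.1 - p.2‖).sum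
  | [], _ => by simp
  | (a, b) :: l, h => by
    have hl : ∀ p ∈ l, p.1 ∈ unitary E ∧ p.2 ∈ unitary E :=
      fun p hp => h p (List.mem_cons_of_mem _ hp)
    have hP : (l.map Prod.fst).prod ∈ unitary E :=
      Submonoid.list_prod_mem _ (by simpa using fun x y hxy => (hl (x, y) hxy).1)
    set P := (l.map Prod.fst).prod
    set Q := (l.map Prod.snd).prod
    calc ‖a * P - b * Q‖ = ‖(a - b) * P + b * (P - Q)‖ := by noncomm_ring
      _ ≤ ‖(a - b) * P‖ + ‖b * (P - Q)‖ := norm_add_le _ _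
      _ = ‖a - b‖ + ‖P - Q‖ := by
        rw [CStarRing.norm_mul_mem_unitary _ hP,
          CStarRing.norm_mem_unitary_mul _ (h (a, b) (by simp)).2]
      _ ≤ ‖a - b‖ + (l.map fun p => ‖p.1 - p.2‖).sum := by
        gcongr; exact CStarRing.norm_list_prod_sub_le l hl

section Extension

variable {k m : ℕ} (S : Fin k → Fin m)

open Classical in
noncomputable def wireSplit (hS : Function.Injective S) :
    BitStr m ≃ BitStr k × ({i // i ∉ Set.range S} → Fin 2) :=
  (Equiv.piEquivPiSubtypeProd (· ∈ Set.range S) fun _ => Fin 2).trans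
    (Equiv.prodCongr ((Equiv.ofInjective S hS).symm.arrowCongr (Equiv.refl _)) (Equiv.refl _))

theorem wireSplit_snd_eq_iff (hS : Function.Injective S) (b b' : BitStr m) :
    (wireSplit S hS b).2 = (wireSplit S hS b').2 ↔ ∀ i, (∀ j, S j ≠ i) → b i = b' i := by
  simp only [wireSplit, Equiv.trans_apply, Equiv.prodCongr_apply, Prod.map_snd, Equiv.refl_apply,
    funext_iff, Subtype.forall, Set.mem_range, not_exists]
  rfl

theorem extMat_eq_submatrix_kronecker (hS : Function.Injective S)
    (A : Matrix (BitStr k) (BitStr k) ℂ) :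
    ExtMat S A = (A ⊗ₖ (1 : Matrix ({i // i ∉ Set.range S} → Fin 2) _ ℂ)).submatrix
      (wireSplit S hS) (wireSplit S hS) := by
  ext b b'
  simp only [ExtMat, submatrix_apply, kroneckerMap_apply, one_apply, wireSplit_snd_eq_iff,
    mul_ite, mul_one, mul_zero]
  rfl

noncomputable def extStarAlgHom (hS : Function.Injective S) :
    Matrix (BitStr k) (BitStr k) ℂ →⋆ₐ[ℂ] Matrix (BitStr m) (BitStr m) ℂ where
  toFun := ExtMat S
  map_one' := by
    rw [extMat_eq_submatrix_kronecker S hS, one_kronecker_one, submatrix_one_equiv]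
  map_mul' A B := by
    simp only [extMat_eq_submatrix_kronecker S hS]
    rw [submatrix_mul_equiv, ← mul_kronecker_mul, one_mul]
  map_zero' := by
    rw [extMat_eq_submatrix_kronecker S hS, zero_kronecker, submatrix_zero]; rfl
  map_add' A B := by
    simp only [extMat_eq_submatrix_kronecker S hS, add_kronecker]
    rfl
  commutes' c := by
    rw [Algebra.algebraMap_eq_smul_one, Algebra.algebraMap_eq_smul_one,
      extMat_eq_submatrix_kronecker S hS, smul_kronecker, one_kronecker_one]
    exact congrArg (c • ·) (submatrix_one_equiv (α := ℂ) (wireSplit S hS))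
  map_star' A := by
    simp only [extMat_eq_submatrix_kronecker S hS, star_eq_conjTranspose, conjTranspose_submatrix,
      conjTranspose_kronecker, conjTranspose_one]

variable {S}

theorem extMat_mem_unitaryGroup (hS : Function.Injective S) {U : Matrix (BitStr k) (BitStr k) ℂ}
    (hU : U ∈ unitaryGroup (BitStr k) ℂ) : ExtMat S U ∈ unitaryGroup (BitStr m) ℂ :=
  Unitary.map_mem (extStarAlgHom S hS) hU

theorem norm_extMat_sub_le (hS : Function.Injective S) (A B : Matrix (BitStr k) (BitStr k) ℂ) :
    ‖ExtMat S A - ExtMat S B‖ ≤ ‖A - B‖ := by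
  calc ‖ExtMat S A - ExtMat S B‖ = ‖extStarAlgHom S hS (A - B)‖ := by rw [map_sub]; rfl
    _ ≤ ‖A - B‖ := NonUnitalStarAlgHom.norm_apply_le _ _

end Extension

theorem norm_circMat_sub_le {m r : ℕ} {k : Fin r → ℕ} {S : ∀ i, Fin (k i) → Fin m}
    (hS : ∀ i, Function.Injective (S i)) {U U' : ∀ i, Matrix (BitStr (k i)) (BitStr (k i)) ℂ}
    (hU : ∀ i, U i ∈ unitaryGroup (BitStr (k i)) ℂ)
    (hU' : ∀ i, U' i ∈ unitaryGroup (BitStr (k i)) ℂ) :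
    ‖circMat S U - circMat S U'‖ ≤ ∑ i, ‖U i - U' i‖ := by
  have h := CStarRing.norm_list_prod_sub_le
    (List.ofFn fun i => (ExtMat (S i) (U i), ExtMat (S i) (U' i))).reverse (by
      simpa using fun i => ⟨extMat_mem_unitaryGroup (hS i) (hU i),
        extMat_mem_unitaryGroup (hS i) (hU' i)⟩)
  simp only [List.map_reverse, List.map_ofFn, List.sum_reverse, List.sum_ofFn] at h
  exact h.trans (Finset.sum_le_sum fun i _ => norm_extMat_sub_le (hS i) _ _)

theorem padBits_zero_last {n : ℕ} (x : Fin n → Fin 2) (y : Fin 2) :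
    padBits 0 x y (Fin.last n) = y := by
  simp [padBits]

theorem MatComputesStringent.eq_of_norm_sub_lt_one {n : ℕ}
    {M M' : Matrix (BitStr (n + 1)) (BitStr (n + 1)) ℂ} {f f' : (Fin n → Fin 2) → Fin 2}
    (hf : MatComputesStringent M f) (hf' : MatComputesStringent M' f') (h : ‖M - M'‖ < 1) :
    f = f' := by
  funext x
  by_contra hne
  have h1 : M (padBits 0 x (f x)) (padBits 0 x 0) = 1 := by
    simpa using hf x 0 (padBits 0 x (f x))
  have h0 : M' (padBits 0 x (f x)) (padBits 0 x 0) = 0 := by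
    rw [hf' x 0, zero_add, if_neg]
    intro heq
    exact hne (by simpa [padBits_zero_last] using congrFun heq (Fin.last n))
  have := norm_entry_le_l2_opNorm (M - M') (padBits 0 x (f x)) (padBits 0 x 0)
  rw [Matrix.sub_apply, h1, h0, sub_zero, norm_one] at this
  linarith

abbrev GridPoint (D : ℕ) := Set.Icc (-(D : ℤ)) D × Set.Icc (-(D : ℤ)) D

theorem card_gridPoint (D : ℕ) : Fintype.card (GridPoint D) = (2 * D + 1) ^ 2 := by
  have h := Int.card_fintype_Icc_of_le (a := -(D : ℤ)) (b := D) (by omega)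
  rw [Fintype.card_prod, ← sq]
  congr 1
  omega

-- The clamping only makes the codomain finite: entries of unitaries are never clamped.
noncomputable def quantize (D : ℕ) (z : ℂ) : GridPoint D :=
  (Set.projIcc _ _ (by omega) ⌊z.re * D⌋, Set.projIcc _ _ (by omega) ⌊z.im * D⌋)

theorem abs_sub_lt_of_projIcc_floor_eq {D : ℕ} (hD : 0 < D) {s t : ℝ} (hs : |s| ≤ 1)
    (ht : |t| ≤ 1) (h : Set.projIcc (-(D : ℤ)) D (by omega) ⌊s * D⌋ =
      Set.projIcc (-(D : ℤ)) D (by omega) ⌊t * D⌋) : |s - t| < 1 / D := by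
  have hD' : (0 : ℝ) < D := by exact_mod_cast hD
  have mem : ∀ u : ℝ, |u| ≤ 1 → ⌊u * D⌋ ∈ Set.Icc (-(D : ℤ)) D := fun u hu => by
    rw [abs_le] at hu
    constructor
    · rw [Int.le_floor]; push_cast; nlinarith
    · rw [Int.floor_le_iff]; push_cast; nlinarith
  rw [Set.projIcc_of_mem _ (mem s hs), Set.projIcc_of_mem _ (mem t ht), Subtype.mk.injEq] at h
  have := Int.abs_sub_lt_one_of_floor_eq_floor h
  rw [← sub_mul, abs_mul, Nat.abs_cast] at this
  rwa [lt_div_iff₀ hD']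

theorem norm_sub_lt_of_quantize_eq {D : ℕ} (hD : 0 < D) {z z' : ℂ} (hz : ‖z‖ ≤ 1)
    (hz' : ‖z'‖ ≤ 1) (h : quantize D z = quantize D z') : ‖z - z'‖ < 2 / D := by
  have hre := abs_sub_lt_of_projIcc_floor_eq hD ((Complex.abs_re_le_norm z).trans hz)
    ((Complex.abs_re_le_norm z').trans hz') (congrArg Prod.fst h)
  have him := abs_sub_lt_of_projIcc_floor_eq hD ((Complex.abs_im_le_norm z).trans hz)
    ((Complex.abs_im_le_norm z').trans hz') (congrArg Prod.snd h)
  calc ‖z - z'‖ ≤ |(z - z').re| + |(z - z').im| := Complex.norm_le_abs_re_add_abs_im _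
    _ < 1 / D + 1 / D := by rw [Complex.sub_re, Complex.sub_im]; exact add_lt_add hre him
    _ = 2 / D := by ring

theorem norm_sub_le_of_quantize_eq {ι : Type*} [Fintype ι] [DecidableEq ι] {D : ℕ} (hD : 0 < D)
    {U U' : Matrix ι ι ℂ} (hU : U ∈ unitaryGroup ι ℂ) (hU' : U' ∈ unitaryGroup ι ℂ)
    (h : ∀ a b, quantize D (U a b) = quantize D (U' a b)) :
    ‖U - U'‖ ≤ Fintype.card ι * Fintype.card ι * (2 / D) :=
  l2_opNorm_le_of_norm_entry_le fun a b => (norm_sub_lt_of_quantize_eq hD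
    (entry_norm_bound_of_unitary hU a b) (entry_norm_bound_of_unitary hU' a b) (h a b)).le

theorem eq_of_forall_quantize_eq {n q D r : ℕ} (hD : 2 * 4 ^ q * r < D) {k : Fin r → ℕ}
    (hk : ∀ i, k i ≤ q) {S : ∀ i, Fin (k i) → Fin (n + 1)} (hS : ∀ i, Function.Injective (S i))
    {U U' : ∀ i, Matrix (BitStr (k i)) (BitStr (k i)) ℂ}
    (hU : ∀ i, U i ∈ unitaryGroup (BitStr (k i)) ℂ)
    (hU' : ∀ i, U' i ∈ unitaryGroup (BitStr (k i)) ℂ)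
    (h : ∀ i a b, quantize D (U i a b) = quantize D (U' i a b))
    {f f' : (Fin n → Fin 2) → Fin 2}
    (hf : MatComputesStringent (circMat S U) f) (hf' : MatComputesStringent (circMat S U') f') :
    f = f' := by
  have hD0 : 0 < D := (Nat.zero_le _).trans_lt hD
  have hgate (i : Fin r) : ‖U i - U' i‖ ≤ 4 ^ q * (2 / D) := by
    refine (norm_sub_le_of_quantize_eq hD0 (hU i) (hU' i) (h i)).trans ?_
    have hcard : (Fintype.card (BitStr (k i)) : ℝ) * Fintype.card (BitStr (k i)) ≤ 4 ^ q := by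
      simp only [Fintype.card_fun, Fintype.card_fin, Nat.cast_pow, Nat.cast_ofNat, ← mul_pow]
      exact pow_le_pow_right₀ (by norm_num) (hk i) |>.trans_eq' (by norm_num)
    exact mul_le_mul_of_nonneg_right hcard (by positivity)
  refine hf.eq_of_norm_sub_lt_one hf' ((norm_circMat_sub_le hS hU hU').trans_lt ?_)
  calc ∑ i, ‖U i - U' i‖ ≤ r * (4 ^ q * (2 / D)) := by
        simpa using Finset.sum_le_card_nsmul Finset.univ _ _ fun i _ => hgate i
    _ < 1 := by
      rw [← mul_assoc, mul_div_assoc', div_lt_one (by exact_mod_cast hD0)]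
      exact_mod_cast (by linarith : r * 4 ^ q * 2 < D)

abbrev GateCode (n q D : ℕ) : Type :=
  Σ k : Fin (q + 1), (Fin k → Fin (n + 1)) × (BitStr k → BitStr k → GridPoint D)

abbrev CircuitCode (n q R D : ℕ) : Type := Σ r : Fin (R + 1), Fin r → GateCode n q D

noncomputable def circuitCode {n q R r : ℕ} (D : ℕ) (hr : r ≤ R) {k : Fin r → ℕ}
    (hk : ∀ i, k i ≤ q) (S : ∀ i, Fin (k i) → Fin (n + 1))
    (U : ∀ i, Matrix (BitStr (k i)) (BitStr (k i)) ℂ) : CircuitCode n q R D :=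
  ⟨⟨r, Nat.lt_succ_of_le hr⟩,
    fun i => ⟨⟨k i, Nat.lt_succ_of_le (hk i)⟩, S i, fun a b => quantize D (U i a b)⟩⟩

theorem eq_of_circuitCode_eq {n q R D r r' : ℕ} (hD : 2 * 4 ^ q * R < D)
    {hr : r ≤ R} {hr' : r' ≤ R} {k : Fin r → ℕ} {k' : Fin r' → ℕ}
    {hk : ∀ i, k i ≤ q} {hk' : ∀ i, k' i ≤ q}
    {S : ∀ i, Fin (k i) → Fin (n + 1)} {S' : ∀ i, Fin (k' i) → Fin (n + 1)}
    {U : ∀ i, Matrix (BitStr (k i)) (BitStr (k i)) ℂ}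
    {U' : ∀ i, Matrix (BitStr (k' i)) (BitStr (k' i)) ℂ}
    (hS : ∀ i, Function.Injective (S i))
    (hU : ∀ i, U i ∈ unitaryGroup (BitStr (k i)) ℂ)
    (hU' : ∀ i, U' i ∈ unitaryGroup (BitStr (k' i)) ℂ)
    {f f' : (Fin n → Fin 2) → Fin 2}
    (hf : MatComputesStringent (circMat S U) f) (hf' : MatComputesStringent (circMat S' U') f')
    (h : circuitCode D hr hk S U = circuitCode D hr' hk' S' U') : f = f' := by
  obtain ⟨hrr, hgates⟩ := Sigma.mk.inj_iff.mp h
  obtain rfl : r = r' := congrArg Fin.val hrr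
  replace hgates := eq_of_heq hgates
  obtain rfl : k = k' := funext fun i => congrArg (fun g => ((g i).1 : ℕ)) hgates
  have hgate (i : Fin r) : S i = S' i ∧ ∀ a b, quantize D (U i a b) = quantize D (U' i a b) := by
    have := (Sigma.mk.inj_iff.mp (congrFun hgates i)).2
    simp only [heq_eq_eq, Prod.mk.injEq] at this
    exact ⟨this.1, fun a b => congrFun (congrFun this.2 a) b⟩
  obtain rfl : S = S' := funext fun i => (hgate i).1
  have hD' : 2 * 4 ^ q * r < D := lt_of_le_of_lt (Nat.mul_le_mul_left _ hr) hD
  exact eq_of_forall_quantize_eq hD' hk hS hU hU' (fun i => (hgate i).2) hf hf'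

theorem card_sigma_fin_fun_le (α : Type*) [Fintype α] [Nonempty α] (R : ℕ) :
    Fintype.card (Σ r : Fin (R + 1), Fin r → α) ≤ (R + 1) * Fintype.card α ^ R := by
  rw [Fintype.card_sigma]
  calc ∑ r : Fin (R + 1), Fintype.card (Fin r → α) ≤ ∑ _r : Fin (R + 1), Fintype.card α ^ R := by
        refine Finset.sum_le_sum fun r _ => ?_
        rw [Fintype.card_fun, Fintype.card_fin]
        exact Nat.pow_le_pow_right Fintype.card_pos (Nat.lt_succ_iff.mp r.2)
    _ = (R + 1) * Fintype.card α ^ R := by simp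

instance (n q D : ℕ) : Nonempty (GateCode n q D) :=
  ⟨⟨0, finZeroElim, fun _ _ => quantize D 0⟩⟩

theorem card_gateCode_le (n q D : ℕ) :
    Fintype.card (GateCode n q D) ≤ (q + 1) * ((n + 1) ^ q * (2 * D + 1) ^ (2 * 4 ^ q)) := by
  rw [Fintype.card_sigma]
  calc ∑ k : Fin (q + 1), Fintype.card ((Fin k → Fin (n + 1)) × (BitStr k → BitStr k → GridPoint D))
      ≤ ∑ _k : Fin (q + 1), (n + 1) ^ q * (2 * D + 1) ^ (2 * 4 ^ q) := by
        refine Finset.sum_le_sum fun k _ => ?_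
        have hk : (k : ℕ) ≤ q := Nat.lt_succ_iff.mp k.2
        rw [Fintype.card_prod, Fintype.card_fun, Fintype.card_fun, Fintype.card_fun, card_gridPoint]
        simp only [Fintype.card_fin, Fintype.card_fun, ← pow_mul]
        refine Nat.mul_le_mul (Nat.pow_le_pow_right (by omega) hk)
          (Nat.pow_le_pow_right (by omega) ?_)
        rw [mul_assoc, ← mul_pow]
        exact Nat.mul_le_mul_left 2 (Nat.pow_le_pow_right (by norm_num) hk)
    _ = (q + 1) * ((n + 1) ^ q * (2 * D + 1) ^ (2 * 4 ^ q)) := by simp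

theorem card_circuitCode_le {n q R : ℕ} (hn : 1 ≤ n) (hR : R * n * 2 ^ (3 * q + 5) ≤ 2 ^ n) :
    Fintype.card (CircuitCode n q R (2 * 4 ^ q * (R + 1))) ≤ 2 ^ 2 ^ (n - 1) := by
  set E := q + n * q + (n + 2 * q + 3) * (2 * 4 ^ q) with hE_def
  have h2q : q + 1 ≤ 2 ^ q := Nat.lt_two_pow_self
  have h4q : 1 ≤ 4 ^ q := Nat.one_le_pow q 4 (by norm_num)
  have hRn : R + 1 ≤ 2 ^ n := by
    have h2 : 2 ≤ n * 2 ^ (3 * q + 5) :=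
      le_trans (Nat.le_self_pow (by omega) 2) (Nat.le_mul_of_pos_left _ hn)
    have : R * 2 ≤ 2 ^ n := (Nat.mul_le_mul_left R h2).trans (by rw [← mul_assoc]; exact hR)
    have : 1 ≤ 2 ^ n := Nat.one_le_two_pow
    omega
  have hgrid : 2 * (2 * 4 ^ q * (R + 1)) + 1 ≤ 2 ^ (n + 2 * q + 3) := by
    rw [pow_add, pow_add, pow_mul, show (2 : ℕ) ^ 2 = 4 by norm_num]
    nlinarith
  have hgate : Fintype.card (GateCode n q (2 * 4 ^ q * (R + 1))) ≤ 2 ^ E := by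
    refine (card_gateCode_le _ _ _).trans ?_
    calc (q + 1) * ((n + 1) ^ q * (2 * (2 * 4 ^ q * (R + 1)) + 1) ^ (2 * 4 ^ q))
        ≤ 2 ^ q * ((2 ^ n) ^ q * (2 ^ (n + 2 * q + 3)) ^ (2 * 4 ^ q)) := by
          gcongr
          exact Nat.lt_two_pow_self
      _ = 2 ^ E := by rw [← pow_mul, ← pow_mul, ← pow_add, ← pow_add, hE_def, Nat.add_assoc q]
  have hE : E + 1 ≤ n * 2 ^ (3 * q + 4) := by
    have h16 : 2 ^ (3 * q + 4) = 16 * 2 ^ q * 4 ^ q := by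
      rw [show 3 * q + 4 = q + 2 * q + 4 by ring, pow_add, pow_add, pow_mul]; ring
    have h1 : n * (q + 1) ≤ n * 2 ^ q := Nat.mul_le_mul_left n h2q
    have h2 : n * 2 ^ q ≤ n * 2 ^ q * 4 ^ q := Nat.le_mul_of_pos_right _ h4q
    have h3 : (n + 2 * q + 3) * 4 ^ q ≤ n * (2 * q + 4) * 4 ^ q := by gcongr; nlinarith
    have h4 : n * (2 * q + 4) * 4 ^ q ≤ n * (4 * 2 ^ q) * 4 ^ q := by gcongr; omega
    rw [h16]
    nlinarith
  calc Fintype.card (CircuitCode n q R (2 * 4 ^ q * (R + 1)))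
      ≤ (R + 1) * Fintype.card (GateCode n q (2 * 4 ^ q * (R + 1))) ^ R :=
        card_sigma_fin_fun_le _ R
    _ ≤ 2 ^ R * (2 ^ E) ^ R := by gcongr; exact Nat.lt_two_pow_self
    _ = 2 ^ (R * (E + 1)) := by ring
    _ ≤ 2 ^ 2 ^ (n - 1) := by
      refine Nat.pow_le_pow_right (by norm_num) ?_
      have h2n : 2 ^ n = 2 * 2 ^ (n - 1) := by rw [← pow_succ']; congr 1; omega
      rw [h2n, show 3 * q + 5 = 3 * q + 4 + 1 by ring, pow_succ] at hR
      nlinarith [Nat.mul_le_mul_left R hE]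

theorem quantum_shannon_lower_bound_stringent_general (q : ℕ) :
    ∃ c : ℝ, 0 < c ∧ c < 1 ∧
      ∀ n : ℕ, 1 ≤ n →
        Nat.card {f : (Fin n → Fin 2) → Fin 2 |
            StringentlyComputedBySmallCircuit q n c f} ≤ 2 ^ 2 ^ (n - 1) := by
  set c : ℝ := 1 / 2 ^ (3 * q + 5)
  refine ⟨c, by positivity, (div_lt_one (by positivity)).mpr (one_lt_pow₀ (by norm_num) (by omega)),
    fun n hn => ?_⟩
  set R := ⌊c * 2 ^ n / n⌋₊
  have hR : R * n * 2 ^ (3 * q + 5) ≤ 2 ^ n := by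
    have hR : (R : ℝ) ≤ c * 2 ^ n / n := Nat.floor_le (by positivity)
    rw [le_div_iff₀ (by exact_mod_cast hn), div_mul_eq_mul_div, one_mul,
      le_div_iff₀ (by positivity)] at hR
    exact_mod_cast hR
  choose r k S U hr hk hS hU hf using fun f : {f | StringentlyComputedBySmallCircuit q n c f} => f.2
  have hrR (f) : r f ≤ R := Nat.le_floor (hr f)
  have code_injective : Function.Injective fun f =>
      circuitCode (2 * 4 ^ q * (R + 1)) (hrR f) (fun i => (hk f i).2) (S f) (U f) :=
    fun f f' h => Subtype.ext <| eq_of_circuitCode_eq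
      (by rw [mul_add_one]; exact Nat.lt_add_of_pos_right (by positivity))
      (hS f) (hU f) (hU f') (hf f) (hf f') h
  calc _ ≤ Nat.card (CircuitCode n q R (2 * 4 ^ q * (R + 1))) :=
        Nat.card_le_card_of_injective _ code_injective
    _ ≤ 2 ^ 2 ^ (n - 1) := by rw [Nat.card_eq_fintype_card]; exact card_circuitCode_le hn hR

theorem quantum_shannon_lower_bound_stringent (q : ℕ) (hq : 1 ≤ q) :
    ∃ c : ℝ, 0 < c ∧ c < 1 ∧
      ∀ n : ℕ, 1 ≤ n →
        Nat.card {f : (Fin n → Fin 2) → Fin 2 |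
            StringentlyComputedBySmallCircuit q n c f} ≤ 2 ^ 2 ^ (n - 1) :=
  quantum_shannon_lower_bound_stringent_general q
end

section
/- Let k ≤ m be natural numbers, let S : Fin k ↪ Fin m be injective, and let U be a unitary matrix indexed by bit strings of length k over ℂ. Then the extension Ext_S(U) is a unitary matrix indexed by bit strings of length m, i.e., Ext_S(U) · (Ext_S(U))^† = 1. -/
/-- Split a length-`m` bit string along an injective wire assignment `S`. -/
noncomputable def splitEquiv {k m : ℕ} (S : Fin k → Fin m) (hS : Function.Injective S) :
    (BitStr k × ({i : Fin m // ∀ j, S j ≠ i} → Fin 2)) ≃ BitStr m where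
  toFun p i := if h : ∃ j, S j = i then p.1 h.choose else p.2 ⟨i, fun j hj => h ⟨j, hj⟩⟩
  invFun b := (fun j => b (S j), fun i => b i.1)
  left_inv p := by
    refine Prod.ext ?_ ?_
    · funext j
      have h : ∃ j', S j' = S j := ⟨j, rfl⟩
      simp only [dif_pos h]
      exact congrArg p.1 (hS h.choose_spec)
    · funext i
      simp only
      rw [dif_neg (fun h => i.2 h.choose h.choose_spec)]
  right_inv b := by
    funext i
    by_cases h : ∃ j, S j = i
    · simp only [dif_pos h]
      exact congrArg b h.choose_spec
    · simp only [dif_neg h]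

open Matrix in
theorem extMat_unitary (k m : ℕ) (hkm : k ≤ m) (S : Fin k → Fin m)
    (hS : Function.Injective S)
    (U : Matrix (BitStr k) (BitStr k) ℂ)
    (hU : U ∈ Matrix.unitaryGroup (BitStr k) ℂ) :
    ExtMat S U * (ExtMat S U)ᴴ = 1 := by
  have hUU : ∀ a a' : BitStr k, (∑ v, U a v * star (U a' v)) = if a = a' then 1 else 0 := by
    intro a a'
    have h1 : U * star U = 1 := hU.2
    have h2 := congrFun (congrFun h1 a) a'
    simpa [Matrix.mul_apply, Matrix.star_apply, Matrix.one_apply] using h2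
  have key : ∀ (c : BitStr m) (v : BitStr k) (w : {i : Fin m // ∀ j, S j ≠ i} → Fin 2),
      ExtMat S U c (splitEquiv S hS (v, w)) =
        if (fun i : {i : Fin m // ∀ j, S j ≠ i} => c i.1) = w
        then U (fun j => c (S j)) v else 0 := by
    intro c v w
    have hsym := (splitEquiv S hS).symm_apply_apply (v, w)
    have h1 : (fun j => splitEquiv S hS (v, w) (S j)) = v := congrArg Prod.fst hsym
    have h2 : (fun i : {i : Fin m // ∀ j, S j ≠ i} => splitEquiv S hS (v, w) i.1) = w :=
      congrArg Prod.snd hsym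
    simp only [ExtMat]
    by_cases hcw : (fun i : {i : Fin m // ∀ j, S j ≠ i} => c i.1) = w
    · rw [if_pos hcw, if_pos, h1]
      intro i hi
      calc c i = w ⟨i, hi⟩ := congrFun hcw ⟨i, hi⟩
        _ = splitEquiv S hS (v, w) i := (congrFun h2 ⟨i, hi⟩).symm
    · rw [if_neg hcw, if_neg]
      intro hC
      apply hcw
      funext i
      calc c i.1 = splitEquiv S hS (v, w) i.1 := hC i.1 i.2
        _ = w i := congrFun h2 i
  ext b b'
  simp only [Matrix.mul_apply, Matrix.conjTranspose_apply]
  rw [← Equiv.sum_comp (splitEquiv S hS)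
      (fun c => ExtMat S U b c * star (ExtMat S U b' c)), Fintype.sum_prod_type]
  have hterm : ∀ v w,
      ExtMat S U b (splitEquiv S hS (v, w)) * star (ExtMat S U b' (splitEquiv S hS (v, w))) =
      (if (fun i : {i : Fin m // ∀ j, S j ≠ i} => b i.1) = w
        then U (fun j => b (S j)) v else 0) *
      star (if (fun i : {i : Fin m // ∀ j, S j ≠ i} => b' i.1) = w
        then U (fun j => b' (S j)) v else 0) := by
    intro v w; rw [key b v w, key b' v w]
  simp only [hterm]
  have hinner : ∀ v : BitStr k,
      (∑ w, (if (fun i : {i : Fin m // ∀ j, S j ≠ i} => b i.1) = w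
          then U (fun j => b (S j)) v else 0) *
        star (if (fun i : {i : Fin m // ∀ j, S j ≠ i} => b' i.1) = w
          then U (fun j => b' (S j)) v else 0)) =
      if (fun i : {i : Fin m // ∀ j, S j ≠ i} => b' i.1)
          = (fun i : {i : Fin m // ∀ j, S j ≠ i} => b i.1)
        then U (fun j => b (S j)) v * star (U (fun j => b' (S j)) v) else 0 := by
    intro v
    rw [Finset.sum_eq_single (fun i : {i : Fin m // ∀ j, S j ≠ i} => b i.1)]
    · by_cases h : (fun i : {i : Fin m // ∀ j, S j ≠ i} => b' i.1)
          = (fun i : {i : Fin m // ∀ j, S j ≠ i} => b i.1) <;> simp [h]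
    · intro w _ hwne
      rw [if_neg (Ne.symm hwne), zero_mul]
    · intro h; exact absurd (Finset.mem_univ _) h
  simp only [hinner]
  by_cases hw : (fun i : {i : Fin m // ∀ j, S j ≠ i} => b' i.1)
      = (fun i : {i : Fin m // ∀ j, S j ≠ i} => b i.1)
  · simp only [if_pos hw]
    rw [hUU, Matrix.one_apply]
    have hiff : ((fun j => b (S j)) = fun j => b' (S j)) ↔ b = b' := by
      constructor
      · intro h; funext i
        by_cases hi : ∃ j, S j = i
        · obtain ⟨j, rfl⟩ := hi; exact congrFun h j
        · push_neg at hi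
          exact (congrFun hw ⟨i, hi⟩).symm
      · intro h; rw [h]
    rw [if_congr hiff rfl rfl]
  · simp only [if_neg hw, Finset.sum_const_zero]
    have hne : b ≠ b' := by
      rintro rfl; exact hw rfl
    rw [Matrix.one_apply_ne hne]
end
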